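/- arXiv:1907.11495 — 4 statements merged into one kernel-verified Lean document; each statement's English description precedes it below -/
import Mathlib

section
/- For every natural number N ≥ 1, the N-qubit operator X₊ = (|0^N⟩⟨1^N| + |1^N⟩⟨0^N|)/2 admits the decomposition X₊ = (1/(N+1)) · Σ_{k=0}^{N} (−1)^k cos(θ_k) · M_{θ_k}, where θ_k = kπ/(N+1) and M_θ = (cos θ · σx + sin θ · σy)^{⊗N}. -/
open Matrix Complex

noncomputable section

/-- Pauli X matrix. -/
def pX : Matrix (Fin 2) (Fin 2) ℂ := !![0, 1; 1, 0]

/-- Pauli Y matrix. -/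
def pY : Matrix (Fin 2) (Fin 2) ℂ := !![0, -Complex.I; Complex.I, 0]

/-- N-fold Kronecker (tensor) power of a single-qubit operator, as a matrix on
`(ℂ²)^{⊗N}` with computational basis indexed by bit strings `Fin N → Fin 2`. -/
def tensorPow (N : ℕ) (A : Matrix (Fin 2) (Fin 2) ℂ) :
    Matrix (Fin N → Fin 2) (Fin N → Fin 2) ℂ :=
  Matrix.of fun b c => ∏ j, A (b j) (c j)

/-- The all-zeros bit string, indexing `|0^N⟩`. -/
def zeros (N : ℕ) : Fin N → Fin 2 := fun _ => 0

/-- The all-ones bit string, indexing `|1^N⟩`. -/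
def ones (N : ℕ) : Fin N → Fin 2 := fun _ => 1

/-- `M_θ = (cos θ · σx + sin θ · σy)^{⊗N}`. -/
def Mθ (N : ℕ) (θ : ℝ) : Matrix (Fin N → Fin 2) (Fin N → Fin 2) ℂ :=
  tensorPow N ((Real.cos θ : ℂ) • pX + (Real.sin θ : ℂ) • pY)

/-- `X₊ = (|0^N⟩⟨1^N| + |1^N⟩⟨0^N|)/2`. -/
def Xplus (N : ℕ) : Matrix (Fin N → Fin 2) (Fin N → Fin 2) ℂ :=
  ((1 : ℂ) / 2) • (Matrix.single (zeros N) (ones N) (1 : ℂ)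
    + Matrix.single (ones N) (zeros N) (1 : ℂ))

/-!
The entry of `M_θ` at `(b, c)` vanishes unless `c` is the bitwise complement of `b`, in which case
it is `exp (i θ (2|b| - N))`, `|b|` the Hamming weight. Writing `(-1)^k = exp (i θ_k (N+1))` and
`cos θ = (exp (i θ) + exp (-i θ)) / 2`, the `k`-sum becomes the sum of two geometric sums
`∑ₖ ζ^{k(|b|+1)} + ∑ₖ ζ^{k|b|}` over the primitive `(N+1)`-th root of unity `ζ = exp (2πi/(N+1))`,
which survive exactly for `|b| = N` and `|b| = 0`, i.e. at the two entries of `X₊`.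
-/

open Finset Real

theorem IsPrimitiveRoot.sum_range_pow_mul {R : Type*} [CommRing R] [IsDomain R] {ζ : R} {n : ℕ}
    (hζ : IsPrimitiveRoot ζ n) (s : ℕ) :
    ∑ k ∈ range n, ζ ^ (k * s) = if n ∣ s then (n : R) else 0 := by
  simp_rw [mul_comm _ s, pow_mul]
  split_ifs with hs
  · simp [(hζ.pow_eq_one_iff_dvd s).2 hs]
  · have hζs : ζ ^ s - 1 ≠ 0 := sub_ne_zero.2 (mt (hζ.pow_eq_one_iff_dvd s).1 hs)
    have h := mul_geom_sum (ζ ^ s) n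
    rw [pow_right_comm, hζ.pow_eq_one, one_pow, sub_self] at h
    exact (mul_eq_zero.1 h).resolve_left hζs

lemma neg_one_pow_mul_cos_mul_exp (N w k : ℕ) :
    (-1 : ℂ) ^ k * (Real.cos (k * π / (N + 1)) : ℂ) *
        Complex.exp (I * ((k * π / (N + 1) : ℝ) : ℂ) * (2 * w - N))
      = (Complex.exp (2 * π * I / (N + 1)) ^ (k * (w + 1))
          + Complex.exp (2 * π * I / (N + 1)) ^ (k * w)) / 2 := by
  have exp_mul_cos_mul_exp : ∀ a b c d : ℂ, Complex.exp a * ((Complex.exp b + Complex.exp c) / 2)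
      * Complex.exp d = (Complex.exp (a + b + d) + Complex.exp (a + c + d)) / 2 := by
    intro a b c d
    simp only [Complex.exp_add]
    ring
  rw [← Complex.exp_pi_mul_I, ← Complex.exp_nat_mul, ← Complex.exp_nat_mul, ← Complex.exp_nat_mul,
    Complex.ofReal_cos, Complex.cos, exp_mul_cos_mul_exp]
  push_cast
  congr 3 <;> field_simp <;> ring

lemma sum_neg_one_pow_mul_cos_mul_exp {N w : ℕ} (hw : w ≤ N) :
    ∑ k ∈ range (N + 1), (-1 : ℂ) ^ k * (Real.cos (k * π / (N + 1)) : ℂ) *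
        Complex.exp (I * ((k * π / (N + 1) : ℝ) : ℂ) * (2 * w - N))
      = (N + 1) * ((if w = 0 then 1 else 0) + (if w = N then 1 else 0)) / 2 := by
  have hζ : IsPrimitiveRoot (Complex.exp (2 * π * I / (N + 1))) (N + 1) := by
    exact_mod_cast Complex.isPrimitiveRoot_exp (N + 1) N.succ_ne_zero
  have dvd_iff_zero : N + 1 ∣ w ↔ w = 0 :=
    ⟨fun h => Nat.eq_zero_of_dvd_of_lt h (by omega), fun h => h ▸ dvd_zero _⟩
  have dvd_succ_iff : N + 1 ∣ w + 1 ↔ w = N :=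
    ⟨fun h => by have := Nat.le_of_dvd w.succ_pos h; omega, fun h => h ▸ dvd_rfl⟩
  simp only [neg_one_pow_mul_cos_mul_exp, ← sum_div, sum_add_distrib, hζ.sum_range_pow_mul,
    dvd_iff_zero, dvd_succ_iff]
  push_cast
  split_ifs <;> ring

theorem hammingNorm_eq_card_fintype_iff {ι : Type*} [Fintype ι] {β : ι → Type*}
    [∀ i, DecidableEq (β i)] [∀ i, Zero (β i)] {x : ∀ i, β i} :
    hammingNorm x = Fintype.card ι ↔ ∀ i, x i ≠ 0 := by
  simp [hammingNorm, ← card_univ, card_filter_eq_iff]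

lemma hammingNorm_eq_zero_iff_eq_zeros {N : ℕ} {b : Fin N → Fin 2} :
    hammingNorm b = 0 ↔ b = zeros N :=
  hammingNorm_eq_zero

lemma hammingNorm_eq_iff_eq_ones {N : ℕ} {b : Fin N → Fin 2} :
    hammingNorm b = N ↔ b = ones N := by
  have hcard := hammingNorm_eq_card_fintype_iff (x := b)
  rw [Fintype.card_fin] at hcard
  rw [hcard]
  exact ⟨fun h => funext fun j => Fin.eq_one_of_ne_zero _ (h j), fun h j => by simp [h, ones]⟩

lemma pauliRot_apply (θ : ℝ) (i j : Fin 2) :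
    ((Real.cos θ : ℂ) • pX + (Real.sin θ : ℂ) • pY) i j
      = if i = j then 0 else Complex.exp (I * θ * (if i = 0 then -1 else 1)) := by
  fin_cases i <;> fin_cases j <;>
    simp [pX, pY, mul_comm I, ← neg_mul, Complex.exp_mul_I, Complex.cos_neg, Complex.sin_neg]

lemma Mθ_apply_of_eq {N : ℕ} (θ : ℝ) {b c : Fin N → Fin 2} {j : Fin N} (hj : b j = c j) :
    Mθ N θ b c = 0 :=
  prod_eq_zero (mem_univ j) (by rw [pauliRot_apply, if_pos hj])

lemma Mθ_apply_of_forall_ne {N : ℕ} (θ : ℝ) {b c : Fin N → Fin 2} (hbc : ∀ j, b j ≠ c j) :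
    Mθ N θ b c = Complex.exp (I * θ * (2 * hammingNorm b - N)) := by
  have hterm : ∀ j, (if b j = 0 then (-1 : ℂ) else 1) = 2 * (if b j ≠ 0 then 1 else 0) - 1 := by
    intro j
    by_cases h : b j = 0 <;> norm_num [h]
  have hsum : ∑ j, (if b j = 0 then (-1 : ℂ) else 1) = 2 * hammingNorm b - N := by
    rw [sum_congr rfl fun j _ => hterm j, sum_sub_distrib, ← mul_sum, sum_boole]
    simp [hammingNorm]
  simp only [Mθ, tensorPow, of_apply, pauliRot_apply, if_neg (hbc _), ← Complex.exp_sum,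
    ← mul_sum, hsum]

lemma Xplus_apply_of_eq {N : ℕ} {b c : Fin N → Fin 2} {j : Fin N} (hj : b j = c j) :
    Xplus N b c = 0 := by
  have h₀ : ¬(zeros N = b ∧ ones N = c) := by rintro ⟨rfl, rfl⟩; simp [zeros, ones] at hj
  have h₁ : ¬(ones N = b ∧ zeros N = c) := by rintro ⟨rfl, rfl⟩; simp [zeros, ones] at hj
  simp [Xplus, h₀, h₁]

lemma Xplus_apply_of_forall_ne {N : ℕ} {b c : Fin N → Fin 2} (hbc : ∀ j, b j ≠ c j) :
    Xplus N b c = ((if b = zeros N then 1 else 0) + (if b = ones N then 1 else 0)) / 2 := by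
  have fin_two_ne : ∀ x y : Fin 2, x ≠ y → y = x + 1 := by decide
  obtain rfl : c = b + 1 := funext fun j => fin_two_ne _ _ (hbc j)
  have h₀ : zeros N = b ∧ ones N = b + 1 ↔ b = zeros N :=
    ⟨fun h => h.1.symm, by rintro rfl; exact ⟨rfl, rfl⟩⟩
  have h₁ : ones N = b ∧ zeros N = b + 1 ↔ b = ones N :=
    ⟨fun h => h.1.symm, by rintro rfl; exact ⟨rfl, rfl⟩⟩
  simp only [Xplus, Matrix.smul_apply, Matrix.add_apply, single_apply, h₀, h₁, smul_eq_mul]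
  ring

theorem Xplus_decomposition_general (N : ℕ) :
    Xplus N
      = ((1 : ℂ) / (N + 1)) •
          ∑ k ∈ Finset.range (N + 1),
            (((-1 : ℂ) ^ k) * ((Real.cos ((k : ℝ) * Real.pi / (N + 1)) : ℝ) : ℂ)) •
              Mθ N ((k : ℝ) * Real.pi / (N + 1)) := by
  ext b c
  simp only [Matrix.smul_apply, Matrix.sum_apply, smul_eq_mul]
  by_cases hbc : ∀ j, b j ≠ c j
  · have hw : hammingNorm b ≤ N := by simpa using hammingNorm_le_card_fintype (x := b)
    rw [Xplus_apply_of_forall_ne hbc]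
    simp only [Mθ_apply_of_forall_ne _ hbc, sum_neg_one_pow_mul_cos_mul_exp hw,
      hammingNorm_eq_zero_iff_eq_zeros, hammingNorm_eq_iff_eq_ones]
    field_simp
  · push Not at hbc
    obtain ⟨j, hj⟩ := hbc
    simp [Xplus_apply_of_eq hj, Mθ_apply_of_eq _ hj]

theorem Xplus_decomposition (N : ℕ) (hN : 1 ≤ N) :
    Xplus N
      = ((1 : ℂ) / (N + 1)) •
          ∑ k ∈ Finset.range (N + 1),
            (((-1 : ℂ) ^ k) * ((Real.cos ((k : ℝ) * Real.pi / (N + 1)) : ℝ) : ℂ)) •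
              Mθ N ((k : ℝ) * Real.pi / (N + 1)) :=
  Xplus_decomposition_general N
end
end

section
/- For all real numbers A, B, C, D, the supremum over real θ and φ of the expression cos²θ · A + sin²θ · B + sin(2θ)·(cos φ · C + sin φ · D) equals (A + B)/2 + √((A − B)²/4 + C² + D²), and this supremum is attained for some θ, φ ∈ ℝ. -/
/-!
Since `cos²θ = (1 + cos 2θ)/2` and `sin²θ = (1 - cos 2θ)/2`, the expression is
`(A + B)/2 + cos 2θ · (A - B)/2 + sin 2θ · S_φ` with `S_φ = cos φ · C + sin φ · D`.
A sinusoid `cos t · a + sin t · b` has maximum `√(a² + b²)`, attained at `t = arg (a + b i)`.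
Applied to `S_φ` this gives `S_φ² ≤ C² + D²` with equality for some `φ`, and applied again
in `t = 2θ` it gives the bound `√((A - B)²/4 + S_φ²)`, which is largest when `S_φ = √(C² + D²)`.
-/

open Real

theorem cos_sq_mul_add_sin_sq_mul (θ A B : ℝ) :
    cos θ ^ 2 * A + sin θ ^ 2 * B = (A + B) / 2 + cos (2 * θ) * ((A - B) / 2) := by
  rw [sin_sq, cos_sq]
  ring

theorem sq_cos_mul_add_sin_mul_le (t a b : ℝ) : (cos t * a + sin t * b) ^ 2 ≤ a ^ 2 + b ^ 2 := by
  nlinarith [sq_nonneg (sin t * a - cos t * b), sin_sq_add_cos_sq t]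

theorem exists_cos_mul_add_sin_mul_eq_sqrt (a b : ℝ) :
    ∃ t, cos t * a + sin t * b = √(a ^ 2 + b ^ 2) := by
  set z : ℂ := a + b * Complex.I
  by_cases hz : z = 0
  · have ha : a = 0 := by simpa [z] using congrArg Complex.re hz
    have hb : b = 0 := by simpa [z] using congrArg Complex.im hz
    exact ⟨0, by simp [ha, hb]⟩
  · have hnorm : ‖z‖ = √(a ^ 2 + b ^ 2) := Complex.norm_add_mul_I a b
    have hpos : 0 < √(a ^ 2 + b ^ 2) := hnorm ▸ norm_pos_iff.mpr hz
    refine ⟨z.arg, ?_⟩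
    rw [Complex.cos_arg hz, Complex.sin_arg, hnorm]
    simp only [z, Complex.add_re, Complex.add_im, Complex.ofReal_re, Complex.ofReal_im,
      Complex.mul_re, Complex.mul_im, Complex.I_re, Complex.I_im]
    field_simp
    rw [sq_sqrt (by positivity)]
    ring

theorem isGreatest_range_cos_mul_add_sin_mul (a b : ℝ) :
    IsGreatest (Set.range fun t => cos t * a + sin t * b) √(a ^ 2 + b ^ 2) := by
  refine ⟨exists_cos_mul_add_sin_mul_eq_sqrt a b, ?_⟩
  rintro _ ⟨t, rfl⟩
  exact (le_abs_self _).trans (abs_le_sqrt (sq_cos_mul_add_sin_mul_le t a b))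

/-- The maximum over the coherent-noise parameters θ, φ of the fidelity expression
`cos²θ·A + sin²θ·B + sin(2θ)(cos φ·C + sin φ·D)` equals
`(A+B)/2 + √((A−B)²/4 + C² + D²)`, and it is attained. -/
theorem fidelity_optimization (A B C D : ℝ) :
    IsGreatest
      {x : ℝ | ∃ θ φ : ℝ,
        x = Real.cos θ ^ 2 * A + Real.sin θ ^ 2 * B
              + Real.sin (2 * θ) * (Real.cos φ * C + Real.sin φ * D)}
      ((A + B) / 2 + Real.sqrt ((A - B) ^ 2 / 4 + C ^ 2 + D ^ 2)) := by
  set r := √(C ^ 2 + D ^ 2)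
  have hradicand : (A - B) ^ 2 / 4 + C ^ 2 + D ^ 2 = ((A - B) / 2) ^ 2 + r ^ 2 := by
    rw [sq_sqrt (by positivity)]
    ring
  refine ⟨?_, ?_⟩
  · obtain ⟨φ, hφ⟩ := exists_cos_mul_add_sin_mul_eq_sqrt C D
    obtain ⟨t, ht⟩ := exists_cos_mul_add_sin_mul_eq_sqrt ((A - B) / 2) r
    refine ⟨t / 2, φ, ?_⟩
    rw [cos_sq_mul_add_sin_sq_mul, mul_div_cancel₀ t two_ne_zero, hφ, hradicand, ← ht]
    ring
  · rintro _ ⟨θ, φ, rfl⟩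
    set S := cos φ * C + sin φ * D
    rw [cos_sq_mul_add_sin_sq_mul, hradicand, add_assoc]
    gcongr
    calc cos (2 * θ) * ((A - B) / 2) + sin (2 * θ) * S ≤ √(((A - B) / 2) ^ 2 + S ^ 2) :=
          (isGreatest_range_cos_mul_add_sin_mul _ _).2 ⟨2 * θ, rfl⟩
      _ ≤ √(((A - B) / 2) ^ 2 + r ^ 2) := by
          rw [sq_sqrt (by positivity)]
          gcongr
          exact sq_cos_mul_add_sin_mul_le φ C D
end

section
/- For every real θ with 0 ≤ θ ≤ π/2, the inequality 1 − 1/(sin(2θ) + 1) ≥ min{cos²θ, sin²θ} holds, with equality exactly at θ = 0, π/4, π/2. -/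
/-!
With `s = sin θ`, `c = cos θ`, the left-hand side is `2sc / (2sc + 1)`. On the unit circle
`2sc - c²(2sc + 1) = c (s - c) (s² + sc + 1)`, which is nonnegative when `0 ≤ c ≤ s` and vanishes
only for `c = 0` or `c = s`; the case `s ≤ c` is symmetric.
-/

open Real

lemma two_mul_mul_sub_sq_mul_eq {s c : ℝ} (h : s ^ 2 + c ^ 2 = 1) :
    2 * s * c - c ^ 2 * (2 * s * c + 1) = c * (s - c) * (s ^ 2 + s * c + 1) := by
  linear_combination (-(s * c)) * h

lemma sq_le_two_mul_mul_div_of_le {s c : ℝ} (hc : 0 ≤ c) (hcs : c ≤ s) (h : s ^ 2 + c ^ 2 = 1) :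
    c ^ 2 ≤ 2 * s * c / (2 * s * c + 1) ∧
      (2 * s * c / (2 * s * c + 1) = c ^ 2 ↔ c = 0 ∨ s = c) := by
  have hd : 0 < 2 * s * c + 1 := by nlinarith [mul_nonneg (hc.trans hcs) hc]
  have hq : 0 < s ^ 2 + s * c + 1 := by nlinarith [mul_nonneg (hc.trans hcs) hc]
  have key := two_mul_mul_sub_sq_mul_eq h
  constructor
  · rw [le_div_iff₀ hd]
    nlinarith [mul_nonneg (mul_nonneg hc (sub_nonneg.2 hcs)) hq.le]
  · rw [div_eq_iff hd.ne', ← sub_eq_zero, key, mul_eq_zero, mul_eq_zero, sub_eq_zero]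
    simp only [hq.ne', or_false]

lemma min_sq_le_two_mul_mul_div {s c : ℝ} (hs : 0 ≤ s) (hc : 0 ≤ c) (h : s ^ 2 + c ^ 2 = 1) :
    min (c ^ 2) (s ^ 2) ≤ 2 * s * c / (2 * s * c + 1) ∧
      (2 * s * c / (2 * s * c + 1) = min (c ^ 2) (s ^ 2) ↔ s = 0 ∨ s = c ∨ c = 0) := by
  wlog hcs : c ≤ s generalizing s c
  · have := this hc hs (by linarith) (le_of_not_ge hcs)
    rw [min_comm, mul_right_comm 2 c s] at this
    refine ⟨this.1, this.2.trans ?_⟩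
    rw [eq_comm (a := c)]
    tauto
  rw [min_eq_left (pow_le_pow_left₀ hc hcs 2)]
  obtain ⟨hle, heq⟩ := sq_le_two_mul_mul_div_of_le hc hcs h
  refine ⟨hle, heq.trans ⟨by tauto, ?_⟩⟩
  rintro (rfl | hsc | hc0)
  exacts [.inl (le_antisymm hcs hc), .inr hsc, .inl hc0]

lemma one_sub_one_div_sin_two_mul_add_one {θ : ℝ} (h : 0 ≤ sin θ * cos θ) :
    1 - 1 / (sin (2 * θ) + 1) = 2 * sin θ * cos θ / (2 * sin θ * cos θ + 1) := by
  rw [sin_two_mul, one_sub_div (by nlinarith), add_sub_cancel_right]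

/-- Comparison of white-noise tolerances: on `[0, π/2]`,
`1 − 1/(sin 2θ + 1) ≥ min{cos²θ, sin²θ}`, with equality exactly at `θ = 0, π/4, π/2`. -/
theorem tolerance_comparison (θ : ℝ) (h0 : 0 ≤ θ) (h1 : θ ≤ Real.pi / 2) :
    1 - 1 / (Real.sin (2 * θ) + 1) ≥ min (Real.cos θ ^ 2) (Real.sin θ ^ 2)
    ∧ (1 - 1 / (Real.sin (2 * θ) + 1) = min (Real.cos θ ^ 2) (Real.sin θ ^ 2)
        ↔ θ = 0 ∨ θ = Real.pi / 4 ∨ θ = Real.pi / 2) := by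
  have hpi := pi_pos
  have hs : 0 ≤ sin θ := sin_nonneg_of_nonneg_of_le_pi h0 (by linarith)
  have hc : 0 ≤ cos θ := cos_nonneg_of_mem_Icc ⟨by linarith, h1⟩
  have hmem : θ ∈ Set.Icc (-(π / 2)) (π / 2) := ⟨by linarith, h1⟩
  have hmem' : π / 2 - θ ∈ Set.Icc (-(π / 2)) (π / 2) := ⟨by linarith, by linarith⟩
  obtain ⟨hle, heq⟩ := min_sq_le_two_mul_mul_div hs hc (sin_sq_add_cos_sq θ)
  rw [one_sub_one_div_sin_two_mul_add_one (mul_nonneg hs hc)]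
  refine ⟨hle, heq.trans (or_congr ?_ (or_congr ?_ ?_))⟩
  · exact sin_eq_zero_iff_of_lt_of_lt (by linarith) (by linarith)
  · rw [← sin_pi_div_two_sub, injOn_sin.eq_iff hmem hmem']
    constructor <;> intro <;> linarith
  · rw [← sin_pi_div_two_sub, sin_eq_zero_iff_of_lt_of_lt (by linarith) (by linarith)]
    constructor <;> intro <;> linarith
end

section
/- For every real θ with 0 ≤ θ ≤ π/2, the inequality 1 − 2/(sin(2θ) + 2) ≥ (2/3)·min{cos²θ, sin²θ} holds. -/
open Real

/-- Comparison of white-noise tolerances of the three-setting witnesses: on `[0, π/2]`,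
`1 − 2/(sin 2θ + 2) ≥ (2/3)·min{cos²θ, sin²θ}`. -/
theorem tolerance_comparison_three_settings (θ : ℝ) (h0 : 0 ≤ θ) (h1 : θ ≤ Real.pi / 2) :
    1 - 2 / (Real.sin (2 * θ) + 2) ≥ (2 / 3) * min (Real.cos θ ^ 2) (Real.sin θ ^ 2) := by
  have hc : 0 ≤ Real.cos θ := Real.cos_nonneg_of_mem_Icc ⟨by linarith [Real.pi_pos], h1⟩
  have hs : 0 ≤ Real.sin θ := Real.sin_nonneg_of_nonneg_of_le_pi h0 (by linarith [Real.pi_pos])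
  have h2 : Real.sin (2 * θ) = 2 * Real.sin θ * Real.cos θ := Real.sin_two_mul θ
  have hpyth : Real.sin θ ^ 2 + Real.cos θ ^ 2 = 1 := Real.sin_sq_add_cos_sq θ
  set c := Real.cos θ
  set s := Real.sin θ
  have hsc : s * c ≤ 1 / 2 := by nlinarith [sq_nonneg (s - c)]
  have hsc0 : 0 ≤ s * c := mul_nonneg hs hc
  have hm : min (c ^ 2) (s ^ 2) ≤ s * c := by
    rcases le_total c s with h | h
    · calc min (c ^ 2) (s ^ 2) ≤ c ^ 2 := min_le_left _ _
        _ = c * c := sq c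
        _ ≤ s * c := by nlinarith
    · calc min (c ^ 2) (s ^ 2) ≤ s ^ 2 := min_le_right _ _
        _ = s * s := sq s
        _ ≤ s * c := by nlinarith
  have hm0 : 0 ≤ min (c ^ 2) (s ^ 2) := le_min (sq_nonneg c) (sq_nonneg s)
  have hD : 0 < 2 * s * c + 2 := by linarith
  rw [h2, ge_iff_le, ← sub_nonneg]
  have key : 1 - 2 / (2 * s * c + 2) - 2 / 3 * min (c ^ 2) (s ^ 2) =
      ((2 * s * c + 2) * (1 - 2 / 3 * min (c ^ 2) (s ^ 2)) - 2) / (2 * s * c + 2) := by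
    field_simp
    ring
  rw [key]
  apply div_nonneg _ hD.le
  nlinarith [mul_nonneg hm0 hsc0]
end
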